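/- Let F be a field and let A and B be unital locally matrix F-algebras, regarded as structures in the first-order language of rings via their ring structures. Then A and B satisfy exactly the same universal sentences of the language of rings if and only if D(A) = D(B). -/

import Mathlib

open FirstOrder FirstOrder.Ring

/-- `D(A)`: the set of positive integers `n` such that `A` contains a unital subalgebra
isomorphic to the `n × n` matrix algebra over `F`. -/
def matrixDegreeSet (F : Type*) [Field F] (A : Type*) [Ring A] [Algebra F A] : Set ℕ :=
  {n | 0 < n ∧ ∃ S : Subalgebra F A, Nonempty (S ≃ₐ[F] Matrix (Fin n) (Fin n) F)}

/-- A unital `F`-algebra is a locally matrix algebra if every finite subset lies in a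
unital subalgebra isomorphic to a matrix algebra `M_n(F)`, `n ≥ 1`. -/
def IsLocallyMatrixAlgebra (F : Type*) [Field F] (A : Type*) [Ring A] [Algebra F A] : Prop :=
  ∀ s : Finset A, ∃ (n : ℕ) (S : Subalgebra F A), 0 < n ∧ (s : Set A) ⊆ S ∧
    Nonempty (S ≃ₐ[F] Matrix (Fin n) (Fin n) F)

/-- A universal sentence in the first-order language of rings: a sentence of the form
`∀ x₁ … ∀ xₘ, φ` with `φ` quantifier-free. -/
def IsUniversalRingSentence (σ : Language.ring.Sentence) : Prop :=
  ∃ (m : ℕ) (φ : Language.ring.BoundedFormula Empty m), φ.IsQF ∧ σ = φ.alls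

/-!
A nontrivial `F`-algebra contains a unital copy of `M_n(F)` iff it contains a full system of
`n × n` matrix units (`e i j * e k l = δ j k • e i l`, `∑ i, e i i = 1`), since such a
system spans a homomorphic image of the simple ring `M_n(F)`. The nonexistence of such a
system is a universal sentence, so universally equivalent algebras have the same `D`.
Conversely, a counterexample in `A` to a universal sentence involves finitely many elements;
they lie in a copy of `M_n(F)` with `n ∈ D(A) = D(B)`, and that copy embeds in `B`, so the
sentence fails in `B` as well.
-/

def IsMatrixUnits {A : Type*} [Ring A] {ι : Type*} [Fintype ι] [DecidableEq ι]
    (e : ι → ι → A) : Prop :=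
  (∀ i j k l, e i j * e k l = if j = k then e i l else 0) ∧ ∑ i, e i i = 1

section MatrixUnits

variable {ι : Type*} [Fintype ι] [DecidableEq ι]

theorem isMatrixUnits_single (R : Type*) [Ring R] :
    IsMatrixUnits (fun i j : ι => Matrix.single i j (1 : R)) := by
  refine ⟨fun i j k l => ?_, Matrix.sum_single_one⟩
  split_ifs with h
  · rw [h, Matrix.single_mul_single_same, one_mul]
  · exact Matrix.single_mul_single_of_ne 1 i j k h 1

variable {A : Type*} [Ring A] {e : ι → ι → A}

theorem IsMatrixUnits.map {B : Type*} [Ring B] (he : IsMatrixUnits e) (f : A →+* B) :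
    IsMatrixUnits (fun i j => f (e i j)) := by
  refine ⟨fun i j k l => ?_, by rw [← map_sum, he.2, map_one]⟩
  rw [← map_mul, he.1]
  split_ifs <;> simp

theorem IsMatrixUnits.nonempty [Nontrivial A] (he : IsMatrixUnits e) : Nonempty ι := by
  by_contra h
  rw [not_nonempty_iff] at h
  simpa using he.2

variable {F : Type*} [Field F] [Algebra F A]

variable (F) in
noncomputable def IsMatrixUnits.toAlgHom (he : IsMatrixUnits e) : Matrix ι ι F →ₐ[F] A :=
  AlgHom.ofLinearMap (Matrix.liftLinear F fun i j => LinearMap.toSpanSingleton F A (e i j))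
    (by
      rw [← Matrix.sum_single_one, map_sum]
      simpa using he.2)
    (by
      intro M N
      induction M using Matrix.induction_on' with
      | h_zero => simp
      | h_add M₁ M₂ h₁ h₂ => simp [add_mul, h₁, h₂]
      | h_std_basis i j a =>
        induction N using Matrix.induction_on' with
        | h_zero => simp
        | h_add N₁ N₂ h₁ h₂ => simp [mul_add, h₁, h₂]
        | h_std_basis k l b =>
          by_cases hjk : j = k
          · subst hjk
            simp [he.1, smul_smul, mul_comm]
          · simp [Matrix.single_mul_single_of_ne a i j k hjk, he.1, hjk])

theorem IsMatrixUnits.exists_subalgebra_algEquiv_matrix [Nontrivial A] (he : IsMatrixUnits e) :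
    ∃ S : Subalgebra F A, Nonempty (S ≃ₐ[F] Matrix ι ι F) := by
  have := he.nonempty
  exact ⟨(he.toAlgHom F).range,
    ⟨(AlgEquiv.ofInjective _ (RingHom.injective (he.toAlgHom F).toRingHom)).symm⟩⟩

theorem exists_isMatrixUnits_of_algEquiv {S : Subalgebra F A} (g : S ≃ₐ[F] Matrix ι ι F) :
    ∃ e : ι → ι → A, IsMatrixUnits e :=
  ⟨_, (isMatrixUnits_single F).map (S.val.toRingHom.comp g.symm.toRingEquiv.toRingHom)⟩

end MatrixUnits

theorem mem_matrixDegreeSet_iff {F A : Type*} [Field F] [Ring A] [Algebra F A] [Nontrivial A]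
    {n : ℕ} : n ∈ matrixDegreeSet F A ↔ ∃ e : Fin n → Fin n → A, IsMatrixUnits e := by
  refine ⟨fun ⟨_, _, ⟨g⟩⟩ => exists_isMatrixUnits_of_algEquiv g, fun ⟨e, he⟩ => ?_⟩
  exact ⟨Fin.pos_iff_nonempty.mpr he.nonempty, he.exists_subalgebra_algEquiv_matrix⟩

theorem IsLocallyMatrixAlgebra.nontrivial {F A : Type*} [Field F] [Ring A] [Algebra F A]
    (hA : IsLocallyMatrixAlgebra F A) : Nontrivial A := by
  obtain ⟨n, S, hn, -, ⟨g⟩⟩ := hA ∅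
  have : Nonempty (Fin n) := Fin.pos_iff_nonempty.mp hn
  have : Nontrivial S := g.toEquiv.nontrivial
  exact Subtype.val_injective.nontrivial (α := S)

namespace FirstOrder.Language.BoundedFormula

theorem IsQF.iInf {L : Language} {α β : Type*} [Finite β] {n : ℕ}
    {f : β → L.BoundedFormula α n} (hf : ∀ b, (f b).IsQF) : (iInf f).IsQF := by
  let _ := Fintype.ofFinite β
  suffices ∀ l : List β, ((l.map f).foldr (· ⊓ ·) ⊤).IsQF from this _
  intro l
  induction l with
  | nil => exact IsQF.top
  | cons b l ih => exact (hf b).inf ih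

theorem IsQF.realize_alls_of_embedding {L : Language} {M N : Type*} [L.Structure M]
    [L.Structure N] {m : ℕ} {φ : L.BoundedFormula Empty m} (hφ : φ.IsQF) (f : M ↪[L] N)
    (h : N ⊨ φ.alls) : M ⊨ φ.alls := by
  rw [Sentence.Realize, realize_alls] at h ⊢
  intro xs
  refine (hφ.realize_embedding f).1 ?_
  rw [Subsingleton.elim (f ∘ default) default]
  exact h (f ∘ xs)

end FirstOrder.Language.BoundedFormula

theorem isUniversalRingSentence_iAlls {β : Type*} [Finite β]
    {φ : Language.ring.Formula (Empty ⊕ β)} (hφ : φ.IsQF) :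
    IsUniversalRingSentence (φ.iAlls β) :=
  ⟨_, _, hφ.relabel _, rfl⟩

namespace FirstOrder.Ring

open FirstOrder.Language BoundedFormula

section MatrixUnitsSentence

variable (ι : Type*) [Fintype ι] [DecidableEq ι]

noncomputable def matrixUnitsFormula : Language.ring.Formula (Empty ⊕ (ι × ι)) :=
  let x : ι → ι → Language.ring.Term ((Empty ⊕ (ι × ι)) ⊕ Fin 0) :=
    fun i j => Term.var (Sum.inl (Sum.inr (i, j)))
  iInf (fun p : (ι × ι) × (ι × ι) =>
      (x p.1.1 p.1.2 * x p.2.1 p.2.2).bdEqual (if p.1.2 = p.2.1 then x p.1.1 p.2.2 else 0)) ⊓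
    ((Finset.univ.toList.map fun i => x i i).foldr (· + ·) 0).bdEqual 1

theorem isQF_matrixUnitsFormula : (matrixUnitsFormula ι).IsQF :=
  (IsQF.iInf fun _ => (IsAtomic.equal _ _).isQF).inf (IsAtomic.equal _ _).isQF

noncomputable def noMatrixUnitsSentence : Language.ring.Sentence :=
  (matrixUnitsFormula ι).not.iAlls (ι × ι)

theorem isUniversalRingSentence_noMatrixUnitsSentence :
    IsUniversalRingSentence (noMatrixUnitsSentence ι) :=
  isUniversalRingSentence_iAlls (isQF_matrixUnitsFormula ι).not

variable {ι} {R : Type*} [Ring R] [CompatibleRing R]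

theorem realize_foldr_add {α : Type*} (l : List (Language.ring.Term α)) (v : α → R) :
    (l.foldr (· + ·) 0).realize v = (l.map (Term.realize v)).sum := by
  induction l with
  | nil => simp
  | cons a l ih => simp [ih]

theorem realize_matrixUnitsFormula (e : ι → ι → R) :
    (matrixUnitsFormula ι).Realize (Sum.elim default (Function.uncurry e)) ↔
      IsMatrixUnits e := by
  simp [matrixUnitsFormula, Formula.Realize, realize_foldr_add, apply_ite (Term.realize _),
    IsMatrixUnits, Function.comp_def]

theorem realize_noMatrixUnitsSentence :
    R ⊨ noMatrixUnitsSentence ι ↔ ¬ ∃ e : ι → ι → R, IsMatrixUnits e := by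
  rw [noMatrixUnitsSentence, Sentence.Realize, Formula.realize_iAlls, not_exists]
  refine (Equiv.curry ι ι R).forall_congr fun x => ?_
  rw [Formula.realize_not, ← realize_matrixUnitsFormula, Equiv.curry_apply,
    Function.uncurry_curry]

end MatrixUnitsSentence

def embeddingOfInjective {R S : Type*} [Ring R] [Ring S] [CompatibleRing R] [CompatibleRing S]
    (f : R →+* S) (hf : Function.Injective f) : Language.ring.Embedding R S where
  toFun := f
  inj' := hf
  map_fun' := by
    intro _ g _
    cases g <;> simp
  map_rel' := by
    intro _ r
    cases r

end FirstOrder.Ring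

section LocallyMatrixAlgebra

open FirstOrder.Language BoundedFormula

variable {F A : Type*} [Field F] [Ring A] [Algebra F A] [CompatibleRing A]

theorem mem_matrixDegreeSet_iff_not_realize [Nontrivial A] {n : ℕ} :
    n ∈ matrixDegreeSet F A ↔ ¬ A ⊨ noMatrixUnitsSentence (Fin n) := by
  rw [realize_noMatrixUnitsSentence, not_not, mem_matrixDegreeSet_iff]

theorem IsLocallyMatrixAlgebra.realize_alls_of_matrixDegreeSet_subset {B : Type*}
    [Ring B] [Algebra F B] [CompatibleRing B]
    (hA : IsLocallyMatrixAlgebra F A) (hD : matrixDegreeSet F A ⊆ matrixDegreeSet F B)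
    {m : ℕ} {φ : Language.ring.BoundedFormula Empty m} (hφ : φ.IsQF) (hB : B ⊨ φ.alls) :
    A ⊨ φ.alls := by
  classical
  rw [Sentence.Realize, realize_alls]
  intro xs
  obtain ⟨n, S, hn, hxs, ⟨g⟩⟩ := hA (Finset.univ.image xs)
  obtain ⟨-, T, ⟨h⟩⟩ := hD ⟨hn, S, ⟨g⟩⟩
  let _ := compatibleRingOfRing S
  let j := g.trans h.symm
  have hS : S ⊨ φ.alls := hφ.realize_alls_of_embedding (embeddingOfInjective
    (T.val.comp j.toAlgHom).toRingHom (Subtype.val_injective.comp j.injective)) hB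
  let ys : Fin m → S := fun i => ⟨xs i, hxs (by simp)⟩
  let incl := embeddingOfInjective S.val.toRingHom Subtype.val_injective
  rw [show xs = incl ∘ ys from rfl, Subsingleton.elim default (incl ∘ default),
    hφ.realize_embedding]
  convert realize_alls.1 hS ys

end LocallyMatrixAlgebra

theorem stmt_4 (F : Type*) [Field F] (A B : Type*) [Ring A] [Algebra F A]
    [Ring B] [Algebra F B]
    (hA : IsLocallyMatrixAlgebra F A) (hB : IsLocallyMatrixAlgebra F B) :
    (∀ σ : Language.ring.Sentence, IsUniversalRingSentence σ →
        (@FirstOrder.Language.Sentence.Realize Language.ring A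
            (compatibleRingOfRing A).toStructure σ ↔
          @FirstOrder.Language.Sentence.Realize Language.ring B
            (compatibleRingOfRing B).toStructure σ)) ↔
      matrixDegreeSet F A = matrixDegreeSet F B := by
  let _ := compatibleRingOfRing A
  let _ := compatibleRingOfRing B
  have := hA.nontrivial
  have := hB.nontrivial
  constructor
  · intro h
    ext n
    rw [mem_matrixDegreeSet_iff_not_realize, mem_matrixDegreeSet_iff_not_realize,
      h _ (isUniversalRingSentence_noMatrixUnitsSentence _)]
  · rintro hD σ ⟨m, φ, hφ, rfl⟩
    exact ⟨hB.realize_alls_of_matrixDegreeSet_subset hD.ge hφ,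
      hA.realize_alls_of_matrixDegreeSet_subset hD.le hφ⟩
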